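/- arXiv:2507.04515 — 3 statements merged into one kernel-verified Lean document; each statement's English description precedes it below -/
import Mathlib

section
/- Let n ∈ ℕ₊, α ∈ (0,1), δ ≥ 0, let H̃ ∈ ℝ^{n×n} be symmetric positive semidefinite, λ ≥ 0, Ω = [I, −I] ∈ ℝ^{n×2n}, τ > 0, and let x, s, x̃, s̃ ∈ ℝ^{2n} have all components positive. Assume ‖x ⊙ s − τe‖ ≤ ατ, assume x̃ᵢ/xᵢ ∈ [1/(1+δ), 1+δ] and s̃ᵢ/sᵢ ∈ [1/(1+δ), 1+δ] for every i, and suppose Δz ∈ ℝ^n and Δx, Δs ∈ ℝ^{2n} satisfy the approximated Newton system: 2λH̃Δz + ΩΔx = 0, ΩᵀΔz + Δs = 0, and s̃ ⊙ Δx + x̃ ⊙ Δs = τe − x ⊙ s. Then, with η = (1+δ)³α/(1−α), it holds that ‖Δx/x‖ ≤ η and ‖Δs/s‖ ≤ η. -/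
open Matrix

/-- Euclidean norm of a finitely-indexed real vector. -/
noncomputable def euclidNorm {ι : Type*} [Fintype ι] (v : ι → ℝ) : ℝ :=
  Real.sqrt (∑ i, v i ^ 2)

/-!
The Newton system forces `Δxᵀ Δs = 2λ Δzᵀ H̃ Δz ≥ 0`. Dividing the third equation by
`√(x̃ ⊙ s̃)` and expanding the square, this orthogonality gives
`∑ s̃ Δx² / x̃ ≤ ∑ r² / (x̃ s̃)` with `r = τe − x ⊙ s`, and symmetrically for `Δs`.
Centrality gives `x ⊙ s ≥ (1 − α)τ` componentwise, and the ratio bounds cost a factor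
`(1 + δ)²` each time `x̃, s̃` are traded for `x, s`, so `‖Δx/x‖, ‖Δs/s‖ ≤ (1 + δ)² α / (1 − α)`.
-/

section EuclidNorm

variable {ι : Type*} [Fintype ι]

theorem abs_le_euclidNorm (v : ι → ℝ) (i : ι) : |v i| ≤ euclidNorm v :=
  Real.abs_le_sqrt (Finset.single_le_sum (fun j _ => sq_nonneg (v j)) (Finset.mem_univ i))

theorem euclidNorm_neg (v : ι → ℝ) : euclidNorm (-v) = euclidNorm v := by
  simp only [euclidNorm, Pi.neg_apply, neg_sq]

theorem euclidNorm_le_mul_of_sum_sq_le {v w : ι → ℝ} {K : ℝ} (hK : 0 ≤ K)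
    (h : ∑ i, v i ^ 2 ≤ K ^ 2 * ∑ i, w i ^ 2) : euclidNorm v ≤ K * euclidNorm w := by
  calc euclidNorm v ≤ Real.sqrt (K ^ 2 * ∑ i, w i ^ 2) := Real.sqrt_le_sqrt h
    _ = K * euclidNorm w := by rw [Real.sqrt_mul' _ (by positivity), Real.sqrt_sq hK]; rfl

end EuclidNorm

theorem dotProduct_nonneg_of_newton_system {m ι : Type*} [Fintype m] [Fintype ι]
    {H : Matrix m m ℝ} (hH : H.PosSemidef) {lam : ℝ} (hlam : 0 ≤ lam) (Ω : Matrix m ι ℝ)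
    {Δz : m → ℝ} {Δx Δs : ι → ℝ}
    (h₁ : (2 * lam) • H *ᵥ Δz + Ω *ᵥ Δx = 0) (h₂ : Ωᵀ *ᵥ Δz + Δs = 0) :
    0 ≤ Δx ⬝ᵥ Δs := by
  have hΔs : Δs = -(Ωᵀ *ᵥ Δz) := eq_neg_of_add_eq_zero_right h₂
  have hΩΔx : Ω *ᵥ Δx = -((2 * lam) • H *ᵥ Δz) := eq_neg_of_add_eq_zero_right h₁
  have hquad : 0 ≤ Δz ⬝ᵥ H *ᵥ Δz := hH.dotProduct_mulVec_nonneg Δz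
  have hdot : Δx ⬝ᵥ Δs = (2 * lam) * (Δz ⬝ᵥ H *ᵥ Δz) := by
    rw [hΔs, dotProduct_neg, dotProduct_mulVec, vecMul_transpose, hΩΔx, neg_dotProduct,
      neg_neg, smul_dotProduct, smul_eq_mul, dotProduct_comm]
  rw [hdot]
  exact mul_nonneg (by linarith) hquad

section ScaledNewtonStep

variable {ι : Type*} [Fintype ι]

theorem sum_scaled_sq_le_of_dotProduct_nonneg {xt st Δx Δs r : ι → ℝ}
    (hxt : ∀ i, 0 < xt i) (hst : ∀ i, 0 < st i)
    (h : ∀ i, st i * Δx i + xt i * Δs i = r i) (horth : 0 ≤ Δx ⬝ᵥ Δs) :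
    ∑ i, st i * Δx i ^ 2 / xt i ≤ ∑ i, r i ^ 2 / (xt i * st i) := by
  have hexpand : ∀ i, r i ^ 2 / (xt i * st i)
      = st i * Δx i ^ 2 / xt i + 2 * (Δx i * Δs i) + xt i * Δs i ^ 2 / st i := by
    intro i
    have := (hxt i).ne'
    have := (hst i).ne'
    rw [← h i]
    field_simp
    ring
  have hΔs_part : 0 ≤ ∑ i, xt i * Δs i ^ 2 / st i :=
    Finset.sum_nonneg fun i _ => by have := hxt i; have := hst i; positivity
  simp only [hexpand, Finset.sum_add_distrib, ← Finset.mul_sum]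
  have hdot : Δx ⬝ᵥ Δs = ∑ i, Δx i * Δs i := rfl
  linarith

theorem sq_div_le_mul_scaled_sq {x s xt st d c A : ℝ} (hx : 0 < x) (hxt : 0 < xt)
    (hxs : A ≤ x * s) (hA : 0 < A) (hxt_le : xt ≤ c * x) (hs_le : s ≤ c * st) :
    (d / x) ^ 2 ≤ c ^ 2 / A * (st * d ^ 2 / xt) := by
  have hc : 0 < c := pos_of_mul_pos_left (hxt.trans_le hxt_le) hx.le
  have hkey : A * xt ≤ c ^ 2 * st * x ^ 2 :=
    calc A * xt ≤ x * s * (c * x) := mul_le_mul hxs hxt_le hxt.le (hA.le.trans hxs)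
      _ = c * x ^ 2 * s := by ring
      _ ≤ c * x ^ 2 * (c * st) := by gcongr
      _ = c ^ 2 * st * x ^ 2 := by ring
  rw [div_pow, show c ^ 2 / A * (st * d ^ 2 / xt) = d ^ 2 * (c ^ 2 * st) / (A * xt) by ring,
    div_le_div_iff₀ (by positivity) (by positivity)]
  nlinarith [sq_nonneg d]

theorem sum_sq_div_mul_le {x s xt st r : ι → ℝ} {c A : ℝ} (hA : 0 < A)
    (hx : ∀ i, 0 < x i) (hxt : ∀ i, 0 < xt i) (hst : ∀ i, 0 < st i)
    (hxs : ∀ i, A ≤ x i * s i) (hx_le : ∀ i, x i ≤ c * xt i) (hs_le : ∀ i, s i ≤ c * st i) :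
    ∑ i, r i ^ 2 / (xt i * st i) ≤ c ^ 2 / A * ∑ i, r i ^ 2 := by
  rw [Finset.mul_sum]
  refine Finset.sum_le_sum fun i _ => ?_
  have hs : 0 < s i := pos_of_mul_pos_right (hA.trans_le (hxs i)) (hx i).le
  have hxti := hxt i
  have hsti := hst i
  have hc : 0 < c := pos_of_mul_pos_left ((hx i).trans_le (hx_le i)) hxti.le
  have hw : A ≤ c ^ 2 * (xt i * st i) :=
    calc A ≤ x i * s i := hxs i
      _ ≤ c * xt i * (c * st i) := mul_le_mul (hx_le i) (hs_le i) hs.le (by positivity)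
      _ = c ^ 2 * (xt i * st i) := by ring
  have hinv : 1 / (xt i * st i) ≤ c ^ 2 / A := by
    rw [div_le_div_iff₀ (by positivity) hA]
    linarith
  calc r i ^ 2 / (xt i * st i) = r i ^ 2 * (1 / (xt i * st i)) := by ring
    _ ≤ r i ^ 2 * (c ^ 2 / A) := mul_le_mul_of_nonneg_left hinv (sq_nonneg _)
    _ = c ^ 2 / A * r i ^ 2 := by ring

theorem euclidNorm_div_le_of_scaled_newton_step {x s xt st Δx Δs r : ι → ℝ} {c A : ℝ}
    (hA : 0 < A) (hx : ∀ i, 0 < x i) (hxt : ∀ i, 0 < xt i) (hst : ∀ i, 0 < st i)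
    (hxs : ∀ i, A ≤ x i * s i) (hxt_le : ∀ i, xt i ≤ c * x i) (hx_le : ∀ i, x i ≤ c * xt i)
    (hs_le : ∀ i, s i ≤ c * st i) (h : ∀ i, st i * Δx i + xt i * Δs i = r i)
    (horth : 0 ≤ Δx ⬝ᵥ Δs) :
    euclidNorm (fun i => Δx i / x i) ≤ c ^ 2 / A * euclidNorm r := by
  apply euclidNorm_le_mul_of_sum_sq_le (by positivity)
  calc ∑ i, (Δx i / x i) ^ 2 ≤ ∑ i, c ^ 2 / A * (st i * Δx i ^ 2 / xt i) :=
        Finset.sum_le_sum fun i _ =>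
          sq_div_le_mul_scaled_sq (hx i) (hxt i) (hxs i) hA (hxt_le i) (hs_le i)
    _ = c ^ 2 / A * ∑ i, st i * Δx i ^ 2 / xt i := by rw [Finset.mul_sum]
    _ ≤ c ^ 2 / A * ∑ i, r i ^ 2 / (xt i * st i) :=
        mul_le_mul_of_nonneg_left (sum_scaled_sq_le_of_dotProduct_nonneg hxt hst h horth)
          (by positivity)
    _ ≤ c ^ 2 / A * (c ^ 2 / A * ∑ i, r i ^ 2) :=
        mul_le_mul_of_nonneg_left (sum_sq_div_mul_le hA hx hxt hst hxs hx_le hs_le) (by positivity)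
    _ = (c ^ 2 / A) ^ 2 * ∑ i, r i ^ 2 := by ring

end ScaledNewtonStep

theorem le_mul_and_le_mul_of_div_mem_Icc {a b c : ℝ} (hb : 0 < b) (hc : 0 < c)
    (h : a / b ∈ Set.Icc (1 / c) c) : a ≤ c * b ∧ b ≤ c * a := by
  obtain ⟨hlow, hup⟩ := h
  rw [div_le_div_iff₀ hc hb] at hlow
  rw [div_le_iff₀ hb] at hup
  constructor <;> linarith

theorem approx_newton_relative_step_bound_general (n : ℕ)
    (α δ : ℝ) (hα : α ∈ Set.Ioo (0:ℝ) 1) (hδ : 0 ≤ δ)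
    (Ht : Matrix (Fin n) (Fin n) ℝ) (hHt : Ht.PosSemidef)
    (lam : ℝ) (hlam : 0 ≤ lam)
    (Ω : Matrix (Fin n) (Fin n ⊕ Fin n) ℝ)
    (τ : ℝ) (hτ : 0 < τ)
    (x s xt st : Fin n ⊕ Fin n → ℝ)
    (hx : ∀ i, 0 < x i) (hs : ∀ i, 0 < s i)
    (hxt : ∀ i, 0 < xt i) (hst : ∀ i, 0 < st i)
    (hcen : Real.sqrt (∑ i, (x i * s i - τ) ^ 2) ≤ α * τ)
    (hratx : ∀ i, xt i / x i ∈ Set.Icc (1 / (1 + δ)) (1 + δ))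
    (hrats : ∀ i, st i / s i ∈ Set.Icc (1 / (1 + δ)) (1 + δ))
    (Δz : Fin n → ℝ) (Δx Δs : Fin n ⊕ Fin n → ℝ)
    (heq1 : (2 * lam) • Ht.mulVec Δz + Ω.mulVec Δx = 0)
    (heq2 : Ωᵀ.mulVec Δz + Δs = 0)
    (heq3 : (fun i => st i * Δx i + xt i * Δs i) = fun i => τ - x i * s i)
    (η : ℝ) (hη : η = (1 + δ) ^ 3 * α / (1 - α)) :
    euclidNorm (fun i => Δx i / x i) ≤ η ∧ euclidNorm (fun i => Δs i / s i) ≤ η := by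
  obtain ⟨hα0, hα1⟩ := hα
  have hc : 0 < 1 + δ := by linarith
  have hx_ratio := fun i => le_mul_and_le_mul_of_div_mem_Icc (hx i) hc (hratx i)
  have hs_ratio := fun i => le_mul_and_le_mul_of_div_mem_Icc (hs i) hc (hrats i)
  have hxs : ∀ i, (1 - α) * τ ≤ x i * s i := fun i => by
    have := (abs_le.mp ((abs_le_euclidNorm _ i).trans hcen)).1
    linarith
  set r : Fin n ⊕ Fin n → ℝ := -fun i => x i * s i - τ with hr_def
  have hr : euclidNorm r ≤ α * τ := (euclidNorm_neg _).trans_le hcen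
  have hnewton : ∀ i, st i * Δx i + xt i * Δs i = r i := fun i => by
    have := congrFun heq3 i
    simp only [hr_def, Pi.neg_apply]
    linarith
  have horth := dotProduct_nonneg_of_newton_system hHt hlam Ω heq1 heq2
  have hA : 0 < (1 - α) * τ := mul_pos (by linarith) hτ
  have hbound : (1 + δ) ^ 2 / ((1 - α) * τ) * euclidNorm r ≤ η :=
    calc (1 + δ) ^ 2 / ((1 - α) * τ) * euclidNorm r
        ≤ (1 + δ) ^ 2 / ((1 - α) * τ) * (α * τ) := by gcongr
      _ = (1 + δ) ^ 2 * α / (1 - α) := by field_simp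
      _ ≤ η := by
        rw [hη]
        gcongr
        · linarith
        · norm_num
  exact ⟨(euclidNorm_div_le_of_scaled_newton_step hA hx hxt hst hxs (fun i => (hx_ratio i).1)
      (fun i => (hx_ratio i).2) (fun i => (hs_ratio i).2) hnewton horth).trans hbound,
    (euclidNorm_div_le_of_scaled_newton_step hA hs hst hxt
      (fun i => (hxs i).trans_eq (mul_comm _ _))
      (fun i => (hs_ratio i).1) (fun i => (hs_ratio i).2) (fun i => (hx_ratio i).2)
      (fun i => (add_comm _ _).trans (hnewton i)) (dotProduct_comm Δx Δs ▸ horth)).trans hbound⟩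

/-- for the approximated Newton step, with `η = (1+δ)³α/(1−α)`, one has
`‖Δx/x‖ ≤ η` and `‖Δs/s‖ ≤ η`. -/
theorem approx_newton_relative_step_bound (n : ℕ) (hn : 0 < n)
    (α δ : ℝ) (hα : α ∈ Set.Ioo (0:ℝ) 1) (hδ : 0 ≤ δ)
    (Ht : Matrix (Fin n) (Fin n) ℝ) (hHt : Ht.PosSemidef)
    (lam : ℝ) (hlam : 0 ≤ lam)
    (Ω : Matrix (Fin n) (Fin n ⊕ Fin n) ℝ)
    (hΩ : Ω = Matrix.fromCols (1 : Matrix (Fin n) (Fin n) ℝ) (-1))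
    (τ : ℝ) (hτ : 0 < τ)
    (x s xt st : Fin n ⊕ Fin n → ℝ)
    (hx : ∀ i, 0 < x i) (hs : ∀ i, 0 < s i)
    (hxt : ∀ i, 0 < xt i) (hst : ∀ i, 0 < st i)
    (hcen : Real.sqrt (∑ i, (x i * s i - τ) ^ 2) ≤ α * τ)
    (hratx : ∀ i, xt i / x i ∈ Set.Icc (1 / (1 + δ)) (1 + δ))
    (hrats : ∀ i, st i / s i ∈ Set.Icc (1 / (1 + δ)) (1 + δ))
    (Δz : Fin n → ℝ) (Δx Δs : Fin n ⊕ Fin n → ℝ)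
    (heq1 : (2 * lam) • Ht.mulVec Δz + Ω.mulVec Δx = 0)
    (heq2 : Ωᵀ.mulVec Δz + Δs = 0)
    (heq3 : (fun i => st i * Δx i + xt i * Δs i) = fun i => τ - x i * s i)
    (η : ℝ) (hη : η = (1 + δ) ^ 3 * α / (1 - α)) :
    euclidNorm (fun i => Δx i / x i) ≤ η ∧ euclidNorm (fun i => Δs i / s i) ≤ η :=
  approx_newton_relative_step_bound_general n α δ hα hδ Ht hHt lam hlam Ω τ hτ x s xt st hx hs hxt
    hst hcen hratx hrats Δz Δx Δs heq1 heq2 heq3 η hη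
end

section
/- Let n ∈ ℕ₊, α ∈ (0,1), δ > 0 be such that η := (1+δ)³α/(1−α) < 1 and, with σ := √2·δ·(1+δ)²·α·√((1+α)/(1−α)) + (1+δ)²·α²/(2(1−α)), one has σ < α; set β := (α−σ)/(1 + α/√(2n)). Let H̃ ∈ ℝ^{n×n} be symmetric positive semidefinite, λ ≥ 0, Ω = [I, −I] ∈ ℝ^{n×2n}, τ > 0, and let x, s, x̃, s̃ ∈ ℝ^{2n} have all components positive with ‖x ⊙ s − τe‖ ≤ ατ, x̃ᵢ/xᵢ ∈ [1/(1+δ), 1+δ] and s̃ᵢ/sᵢ ∈ [1/(1+δ), 1+δ] for every i. Suppose Δz ∈ ℝ^n and Δx, Δs ∈ ℝ^{2n} satisfy the approximated Newton system: 2λH̃Δz + ΩΔx = 0, ΩᵀΔz + Δs = 0, and s̃ ⊙ Δx + x̃ ⊙ Δs = τe − x ⊙ s. Then the next iterate x⁺ = x + Δx, s⁺ = s + Δs and τ⁺ = (1 − β/√(2n))·τ satisfy: every component of x⁺ and of s⁺ is positive, and ‖x⁺ ⊙ s⁺ − τ⁺e‖ ≤ α·τ⁺. -/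
open Matrix

/-- Euclidean norm of a finitely-indexed real vector. -/
noncomputable def enorm' {ι : Type*} [Fintype ι] (v : ι → ℝ) : ℝ :=
  Real.sqrt (∑ i, v i ^ 2)

open Finset

/-!
With the scaling `D = diag (√(x̃ / s̃))` the approximated Newton equation reads
`√(x̃ ⊙ s̃) ⊙ (D⁻¹Δx + DΔs) = τe − x ⊙ s`, while the Newton system gives
`Δxᵀ Δs = 2λ Δzᵀ H̃ Δz ≥ 0`. Hence
`‖D⁻¹Δx‖² + ‖DΔs‖² ≤ ‖D⁻¹Δx + DΔs‖² ≤ (1 + δ)² α² τ / (1 − α)`, which bounds the second-order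
term `Δx ⊙ Δs` by `σ₂τ` and the error `(s − s̃) ⊙ Δx + (x − x̃) ⊙ Δs` of the approximated
linearization by `σ₁τ`. Their sum is `x⁺ ⊙ s⁺ − τe`, so it has norm at most `στ`; the same
bounds keep `x ⊙ s` positive along the whole segment to `(x⁺, s⁺)`, and moving from `τ` to `τ⁺`
costs `βτ`, which `β` is chosen to absorb: `στ + βτ = ατ⁺`.
-/

section EuclideanNorm

variable {ι : Type*} [Fintype ι]

lemma enorm'_eq_norm_toLp (v : ι → ℝ) : enorm' v = ‖WithLp.toLp 2 v‖ := by
  simp [EuclideanSpace.norm_eq, enorm']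

lemma sq_enorm' (v : ι → ℝ) : enorm' v ^ 2 = ∑ i, v i ^ 2 :=
  Real.sq_sqrt (sum_nonneg fun _ _ => sq_nonneg _)

lemma enorm'_add_le (u v : ι → ℝ) : enorm' (u + v) ≤ enorm' u + enorm' v := by
  simpa only [enorm'_eq_norm_toLp, WithLp.toLp_add] using norm_add_le _ _

lemma abs_le_enorm' (v : ι → ℝ) (i : ι) : |v i| ≤ enorm' v := by
  simpa only [enorm'_eq_norm_toLp, Real.norm_eq_abs] using
    PiLp.norm_apply_le (WithLp.toLp 2 v) i

lemma enorm'_const (c : ℝ) : enorm' (fun _ : ι => c) = √(Fintype.card ι) * |c| := by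
  rw [enorm', sum_const, card_univ, nsmul_eq_mul, Real.sqrt_mul (Nat.cast_nonneg _),
    Real.sqrt_sq_eq_abs]

lemma enorm'_le_sum_abs (v : ι → ℝ) : enorm' v ≤ ∑ i, |v i| := by
  refine Real.sqrt_le_iff.mpr ⟨sum_nonneg fun i _ => abs_nonneg (v i), ?_⟩
  simpa only [sq_abs] using sum_sq_le_sq_sum_of_nonneg fun i _ => abs_nonneg (v i)

end EuclideanNorm

section ScaledNorm

variable {a b : ℝ}

lemma weighted_sq_add_eq (ha : 0 < a) (hb : 0 < b) (X S : ℝ) :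
    b * X ^ 2 / a + a * S ^ 2 / b = (b * X + a * S) ^ 2 / (a * b) - 2 * (X * S) := by
  field_simp
  ring

lemma two_mul_abs_mul_le_weighted (ha : 0 < a) (hb : 0 < b) (X S : ℝ) :
    2 * |X * S| ≤ b * X ^ 2 / a + a * S ^ 2 / b := by
  have key : b * X ^ 2 / a + a * S ^ 2 / b - 2 * |X * S|
      = (b * |X| - a * |S|) ^ 2 / (a * b) := by
    field_simp
    rw [abs_mul, ← sq_abs X, ← sq_abs S]
    ring
  nlinarith [div_nonneg (sq_nonneg (b * |X| - a * |S|)) (mul_pos ha hb).le]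

lemma add_sq_le_weighted (ha : 0 < a) (hb : 0 < b) (X S : ℝ) :
    (b * |X| + a * |S|) ^ 2 ≤ 2 * (a * b) * (b * X ^ 2 / a + a * S ^ 2 / b) := by
  have key : 2 * (a * b) * (b * X ^ 2 / a + a * S ^ 2 / b)
      = 2 * ((b * |X|) ^ 2 + (a * |S|) ^ 2) := by
    rw [mul_pow, mul_pow, sq_abs, sq_abs]
    field_simp
  rw [key]
  nlinarith [sq_nonneg (b * |X| - a * |S|)]

variable {ι : Type*} [Fintype ι]

/-- `‖D⁻¹ X‖² + ‖D S‖²` for the primal-dual scaling `D = diag (√(a / b))`. -/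
noncomputable def scaledSqNorm (a b X S : ι → ℝ) : ℝ :=
  ∑ i, (b i * X i ^ 2 / a i + a i * S i ^ 2 / b i)

variable {a b X S : ι → ℝ}

lemma scaledSqNorm_le (ha : ∀ i, 0 < a i) (hb : ∀ i, 0 < b i) (hXS : 0 ≤ X ⬝ᵥ S) {c : ℝ}
    (hc : 0 < c) (hab : ∀ i, c ≤ a i * b i) :
    scaledSqNorm a b X S ≤ (∑ i, (b i * X i + a i * S i) ^ 2) / c := by
  calc scaledSqNorm a b X S
      = ∑ i, (b i * X i + a i * S i) ^ 2 / (a i * b i) - 2 * (X ⬝ᵥ S) := by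
        simp only [scaledSqNorm, weighted_sq_add_eq (ha _) (hb _), sum_sub_distrib, ← mul_sum,
          dotProduct]
    _ ≤ ∑ i, (b i * X i + a i * S i) ^ 2 / c := by
        have := sum_le_sum fun i (_ : i ∈ univ) =>
          div_le_div_of_nonneg_left (sq_nonneg (b i * X i + a i * S i)) hc (hab i)
        linarith
    _ = (∑ i, (b i * X i + a i * S i) ^ 2) / c := (sum_div _ _ _).symm

lemma enorm'_mul_le_scaledSqNorm (ha : ∀ i, 0 < a i) (hb : ∀ i, 0 < b i) :
    enorm' (fun i => X i * S i) ≤ scaledSqNorm a b X S / 2 := by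
  calc enorm' (fun i => X i * S i) ≤ ∑ i, |X i * S i| := enorm'_le_sum_abs _
    _ ≤ ∑ i, (b i * X i ^ 2 / a i + a i * S i ^ 2 / b i) / 2 :=
        sum_le_sum fun i _ => by linarith [two_mul_abs_mul_le_weighted (ha i) (hb i) (X i) (S i)]
    _ = scaledSqNorm a b X S / 2 := (sum_div _ _ _).symm

lemma sq_enorm'_le_scaledSqNorm (ha : ∀ i, 0 < a i) (hb : ∀ i, 0 < b i) {E : ι → ℝ}
    {δ K : ℝ} (hE : ∀ i, |E i| ≤ δ * (b i * |X i| + a i * |S i|)) (hK : ∀ i, a i * b i ≤ K) :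
    enorm' E ^ 2 ≤ 2 * δ ^ 2 * K * scaledSqNorm a b X S := by
  rw [sq_enorm', scaledSqNorm, mul_sum]
  refine sum_le_sum fun i _ => ?_
  have hP : 0 ≤ b i * X i ^ 2 / a i + a i * S i ^ 2 / b i := by
    have := ha i; have := hb i; positivity
  calc E i ^ 2 ≤ (δ * (b i * |X i| + a i * |S i|)) ^ 2 := by
        rw [← sq_abs]; exact pow_le_pow_left₀ (abs_nonneg _) (hE i) 2
    _ = δ ^ 2 * (b i * |X i| + a i * |S i|) ^ 2 := by ring
    _ ≤ δ ^ 2 * (2 * (a i * b i) * (b i * X i ^ 2 / a i + a i * S i ^ 2 / b i)) :=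
        mul_le_mul_of_nonneg_left (add_sq_le_weighted (ha i) (hb i) _ _) (sq_nonneg δ)
    _ ≤ 2 * δ ^ 2 * K * (b i * X i ^ 2 / a i + a i * S i ^ 2 / b i) := by
        nlinarith [mul_le_mul_of_nonneg_right (hK i) hP, sq_nonneg δ]

end ScaledNorm

lemma add_pos_of_forall_mul_pos {a b c d : ℝ} (ha : 0 < a)
    (h : ∀ t ∈ Set.Ioc (0 : ℝ) 1, 0 < (a + t * c) * (b + t * d)) : 0 < a + c := by
  by_contra! hac
  have hc : 0 < -c := by linarith
  have ht : a / -c ∈ Set.Ioc (0 : ℝ) 1 := ⟨div_pos ha hc, (div_le_one hc).mpr (by linarith)⟩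
  have hroot : a + a / -c * c = 0 := by field_simp [(neg_pos.mp hc).ne]; ring
  simpa [hroot] using h _ ht

/-- Along the segment the product is `(1 - t) x s + t τ + t E + t² dx ds > 0`, so neither factor
can reach zero. -/
lemma add_pos_of_newton_step {x s xt st dx ds τ e u : ℝ} (hx : 0 < x) (hs : 0 < s)
    (hu : 0 ≤ u) (heu : e + u < τ) (hE : -e ≤ (s - st) * dx + (x - xt) * ds) (hdd : -u ≤ dx * ds)
    (hnewton : st * dx + xt * ds = τ - x * s) : 0 < x + dx ∧ 0 < s + ds := by
  have hpath : ∀ t ∈ Set.Ioc (0 : ℝ) 1, 0 < (x + t * dx) * (s + t * ds) := by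
    rintro t ⟨ht0, ht1⟩
    have hexpand : (x + t * dx) * (s + t * ds) = (1 - t) * (x * s) + t * τ
        + t * ((s - st) * dx + (x - xt) * ds) + t ^ 2 * (dx * ds) := by
      linear_combination t * hnewton
    rw [hexpand]
    nlinarith [mul_pos hx hs, mul_le_mul_of_nonneg_left hE ht0.le,
      mul_le_mul_of_nonneg_left hdd (sq_nonneg t), mul_le_mul_of_nonneg_right ht1 hu]
  exact ⟨add_pos_of_forall_mul_pos hx hpath,
    add_pos_of_forall_mul_pos hs fun t ht => mul_comm (x + t * dx) _ ▸ hpath t ht⟩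

lemma le_mul_of_div_mem_Icc {x y δ : ℝ} (hx : 0 < x) (hδ : 0 ≤ δ)
    (h : y / x ∈ Set.Icc (1 / (1 + δ)) (1 + δ)) : y ≤ (1 + δ) * x ∧ x ≤ (1 + δ) * y := by
  obtain ⟨hlo, hhi⟩ := h
  rw [div_le_div_iff₀ (by linarith) hx] at hlo
  rw [div_le_iff₀ hx] at hhi
  constructor <;> linarith

lemma abs_sub_le_of_div_mem_Icc {x y δ : ℝ} (hx : 0 < x) (hδ : 0 ≤ δ)
    (h : y / x ∈ Set.Icc (1 / (1 + δ)) (1 + δ)) : |x - y| ≤ δ * y := by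
  obtain ⟨hyx, hxy⟩ := le_mul_of_div_mem_Icc hx hδ h
  have hy : 0 ≤ y := by nlinarith
  rw [abs_le]
  constructor <;> nlinarith

noncomputable def scalingErrorCoeff (α δ : ℝ) : ℝ :=
  √2 * δ * (1 + δ) ^ 2 * α * √((1 + α) / (1 - α))

noncomputable def secondOrderCoeff (α δ : ℝ) : ℝ :=
  (1 + δ) ^ 2 * α ^ 2 / (2 * (1 - α))

section Neighborhood

variable {ι : Type*} [Fintype ι] {α δ τ : ℝ} {x s xt st Δx Δs : ι → ℝ}

/-- How far the exact linearization `s ⊙ Δx + x ⊙ Δs` is from the approximated one. -/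
def scalingError (x s xt st Δx Δs : ι → ℝ) : ι → ℝ :=
  fun i => (s i - st i) * Δx i + (x i - xt i) * Δs i

lemma mul_mem_Icc_of_enorm'_le (hcen : enorm' (fun i => x i * s i - τ) ≤ α * τ) (i : ι) :
    (1 - α) * τ ≤ x i * s i ∧ x i * s i ≤ (1 + α) * τ := by
  have := abs_le.mp ((abs_le_enorm' _ i).trans hcen)
  constructor <;> linarith [this.1, this.2]

variable (hδ : 0 ≤ δ) (hx : ∀ i, 0 < x i) (hs : ∀ i, 0 < s i) (hxt : ∀ i, 0 < xt i)
  (hst : ∀ i, 0 < st i) (hcen : enorm' (fun i => x i * s i - τ) ≤ α * τ)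
  (hratx : ∀ i, xt i / x i ∈ Set.Icc (1 / (1 + δ)) (1 + δ))
  (hrats : ∀ i, st i / s i ∈ Set.Icc (1 / (1 + δ)) (1 + δ))
  (hdot : 0 ≤ Δx ⬝ᵥ Δs) (hnewton : ∀ i, st i * Δx i + xt i * Δs i = τ - x i * s i)
include hδ hx hs hxt hst hcen hratx hrats hdot hnewton

lemma scaledSqNorm_le_of_mem_neighborhood (hα : α < 1) (hτ : 0 < τ) :
    scaledSqNorm xt st Δx Δs ≤ (1 + δ) ^ 2 * α ^ 2 * τ / (1 - α) := by
  have hc : 0 < (1 - α) * τ / (1 + δ) ^ 2 := div_pos (mul_pos (by linarith) hτ) (by positivity)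
  have hlower : ∀ i, (1 - α) * τ / (1 + δ) ^ 2 ≤ xt i * st i := fun i => by
    rw [div_le_iff₀ (by positivity)]
    have hxs := (mul_mem_Icc_of_enorm'_le hcen i).1
    nlinarith [(le_mul_of_div_mem_Icc (hx i) hδ (hratx i)).2,
      (le_mul_of_div_mem_Icc (hs i) hδ (hrats i)).2, hx i, hs i, hxt i, hst i]
  have hsum : ∑ i, (st i * Δx i + xt i * Δs i) ^ 2 ≤ (α * τ) ^ 2 := by
    calc ∑ i, (st i * Δx i + xt i * Δs i) ^ 2 = enorm' (fun i => x i * s i - τ) ^ 2 := by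
          rw [sq_enorm']; exact sum_congr rfl fun i _ => by rw [hnewton]; ring
      _ ≤ (α * τ) ^ 2 := pow_le_pow_left₀ (Real.sqrt_nonneg _) hcen 2
  calc scaledSqNorm xt st Δx Δs
      ≤ (∑ i, (st i * Δx i + xt i * Δs i) ^ 2) / ((1 - α) * τ / (1 + δ) ^ 2) :=
        scaledSqNorm_le hxt hst hdot hc hlower
    _ ≤ (α * τ) ^ 2 / ((1 - α) * τ / (1 + δ) ^ 2) := div_le_div_of_nonneg_right hsum hc.le
    _ = (1 + δ) ^ 2 * α ^ 2 * τ / (1 - α) := by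
        have : 1 - α ≠ 0 := by linarith
        field_simp

lemma enorm'_mul_le_of_mem_neighborhood (hα : α < 1) (hτ : 0 < τ) :
    enorm' (fun i => Δx i * Δs i) ≤ secondOrderCoeff α δ * τ := by
  calc enorm' (fun i => Δx i * Δs i) ≤ scaledSqNorm xt st Δx Δs / 2 :=
        enorm'_mul_le_scaledSqNorm hxt hst
    _ ≤ (1 + δ) ^ 2 * α ^ 2 * τ / (1 - α) / 2 := by
        linarith [scaledSqNorm_le_of_mem_neighborhood hδ hx hs hxt hst hcen hratx hrats hdot
          hnewton hα hτ]
    _ = secondOrderCoeff α δ * τ := by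
        have : 1 - α ≠ 0 := by linarith
        rw [secondOrderCoeff]
        field_simp

lemma enorm'_scalingError_le_of_mem_neighborhood (hα₀ : 0 ≤ α) (hα : α < 1) (hτ : 0 < τ) :
    enorm' (scalingError x s xt st Δx Δs) ≤ scalingErrorCoeff α δ * τ := by
  have h1α : 0 < 1 - α := by linarith
  have hE : ∀ i, |scalingError x s xt st Δx Δs i| ≤ δ * (st i * |Δx i| + xt i * |Δs i|) :=
    fun i => by
      have hsd := mul_le_mul_of_nonneg_right (abs_sub_le_of_div_mem_Icc (hs i) hδ (hrats i))
        (abs_nonneg (Δx i))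
      have hxd := mul_le_mul_of_nonneg_right (abs_sub_le_of_div_mem_Icc (hx i) hδ (hratx i))
        (abs_nonneg (Δs i))
      calc |scalingError x s xt st Δx Δs i|
          ≤ |s i - st i| * |Δx i| + |x i - xt i| * |Δs i| := by
            simpa only [scalingError, abs_mul] using
              abs_add_le ((s i - st i) * Δx i) ((x i - xt i) * Δs i)
        _ ≤ δ * (st i * |Δx i| + xt i * |Δs i|) := by linarith
  have hupper : ∀ i, xt i * st i ≤ (1 + δ) ^ 2 * ((1 + α) * τ) := fun i => by
    have hxs := (mul_mem_Icc_of_enorm'_le hcen i).2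
    nlinarith [(le_mul_of_div_mem_Icc (hx i) hδ (hratx i)).1,
      (le_mul_of_div_mem_Icc (hs i) hδ (hrats i)).1, hx i, hs i, hxt i, hst i]
  have hsq : enorm' (scalingError x s xt st Δx Δs) ^ 2 ≤ (scalingErrorCoeff α δ * τ) ^ 2 := by
    calc enorm' (scalingError x s xt st Δx Δs) ^ 2
        ≤ 2 * δ ^ 2 * ((1 + δ) ^ 2 * ((1 + α) * τ)) * scaledSqNorm xt st Δx Δs :=
          sq_enorm'_le_scaledSqNorm hxt hst hE hupper
      _ ≤ 2 * δ ^ 2 * ((1 + δ) ^ 2 * ((1 + α) * τ)) * ((1 + δ) ^ 2 * α ^ 2 * τ / (1 - α)) :=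
          mul_le_mul_of_nonneg_left (scaledSqNorm_le_of_mem_neighborhood hδ hx hs hxt hst hcen
            hratx hrats hdot hnewton hα hτ) (by positivity)
      _ = (scalingErrorCoeff α δ * τ) ^ 2 := by
          simp only [scalingErrorCoeff, mul_pow]
          rw [Real.sq_sqrt zero_le_two, Real.sq_sqrt (by positivity)]
          field_simp
  exact (pow_le_pow_iff_left₀ (Real.sqrt_nonneg _) (by unfold scalingErrorCoeff; positivity)
    two_ne_zero).mp hsq

lemma newton_step_mem_neighborhood (hα₀ : 0 ≤ α) (hα : α < 1) (hτ : 0 < τ)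
    (hσ : scalingErrorCoeff α δ + secondOrderCoeff α δ < 1) :
    (∀ i, 0 < x i + Δx i) ∧ (∀ i, 0 < s i + Δs i) ∧
      enorm' (fun i => (x i + Δx i) * (s i + Δs i) - τ)
        ≤ (scalingErrorCoeff α δ + secondOrderCoeff α δ) * τ := by
  have hE := enorm'_scalingError_le_of_mem_neighborhood hδ hx hs hxt hst hcen hratx hrats hdot
    hnewton hα₀ hα hτ
  have hu := enorm'_mul_le_of_mem_neighborhood hδ hx hs hxt hst hcen hratx hrats hdot hnewton
    hα hτ
  have hq : 0 ≤ secondOrderCoeff α δ := div_nonneg (by positivity) (by linarith)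
  have hpos : ∀ i, 0 < x i + Δx i ∧ 0 < s i + Δs i := fun i =>
    add_pos_of_newton_step (hx i) (hs i) (mul_nonneg hq hτ.le)
      (by linarith [mul_lt_mul_of_pos_right hσ hτ])
      (neg_le_of_abs_le ((abs_le_enorm' _ i).trans hE))
      (neg_le_of_abs_le ((abs_le_enorm' (fun i => Δx i * Δs i) i).trans hu)) (hnewton i)
  have hsplit : (fun i => (x i + Δx i) * (s i + Δs i) - τ)
      = (fun i => Δx i * Δs i) + scalingError x s xt st Δx Δs := by
    funext i
    simp only [Pi.add_apply, scalingError]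
    linear_combination hnewton i
  refine ⟨fun i => (hpos i).1, fun i => (hpos i).2, ?_⟩
  rw [hsplit]
  linarith [enorm'_add_le (fun i => Δx i * Δs i) (scalingError x s xt st Δx Δs)]

end Neighborhood

lemma dotProduct_nonneg_of_newton {m ι : Type*} [Fintype m] [Fintype ι] {H : Matrix m m ℝ}
    (hH : H.PosSemidef) {c : ℝ} (hc : 0 ≤ c) {Ω : Matrix m ι ℝ} {Δz : m → ℝ} {Δx Δs : ι → ℝ}
    (h₁ : c • H *ᵥ Δz + Ω *ᵥ Δx = 0) (h₂ : Ωᵀ *ᵥ Δz + Δs = 0) : 0 ≤ Δx ⬝ᵥ Δs := by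
  have hΔs : Δs = -(Ωᵀ *ᵥ Δz) := eq_neg_of_add_eq_zero_right h₂
  have hΩΔx : Ω *ᵥ Δx = -(c • H *ᵥ Δz) := eq_neg_of_add_eq_zero_right h₁
  calc 0 ≤ c * (Δz ⬝ᵥ H *ᵥ Δz) :=
        mul_nonneg hc (by simpa using hH.dotProduct_mulVec_nonneg Δz)
    _ = Δx ⬝ᵥ Δs := by
      rw [hΔs, dotProduct_neg, dotProduct_mulVec Δx Ωᵀ, vecMul_transpose, hΩΔx, neg_dotProduct,
        neg_neg, smul_dotProduct, dotProduct_comm, smul_eq_mul]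

theorem approx_newton_step_invariance_general (n : ℕ) (hn : 0 < n)
    (α δ σ β : ℝ) (hα : α ∈ Set.Ioo (0:ℝ) 1) (hδ : 0 < δ)
    (hσdef : σ = Real.sqrt 2 * δ * (1 + δ) ^ 2 * α * Real.sqrt ((1 + α) / (1 - α))
      + (1 + δ) ^ 2 * α ^ 2 / (2 * (1 - α)))
    (hσlt : σ < α)
    (hβ : β = (α - σ) / (1 + α / Real.sqrt (2 * n)))
    (Ht : Matrix (Fin n) (Fin n) ℝ) (hHt : Ht.PosSemidef)
    (lam : ℝ) (hlam : 0 ≤ lam)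
    (Ω : Matrix (Fin n) (Fin n ⊕ Fin n) ℝ)
    (τ : ℝ) (hτ : 0 < τ)
    (x s xt st : Fin n ⊕ Fin n → ℝ)
    (hx : ∀ i, 0 < x i) (hs : ∀ i, 0 < s i)
    (hxt : ∀ i, 0 < xt i) (hst : ∀ i, 0 < st i)
    (hcen : enorm' (fun i => x i * s i - τ) ≤ α * τ)
    (hratx : ∀ i, xt i / x i ∈ Set.Icc (1 / (1 + δ)) (1 + δ))
    (hrats : ∀ i, st i / s i ∈ Set.Icc (1 / (1 + δ)) (1 + δ))
    (Δz : Fin n → ℝ) (Δx Δs : Fin n ⊕ Fin n → ℝ)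
    (heq1 : (2 * lam) • Ht.mulVec Δz + Ω.mulVec Δx = 0)
    (heq2 : Ωᵀ.mulVec Δz + Δs = 0)
    (heq3 : (fun i => st i * Δx i + xt i * Δs i) = fun i => τ - x i * s i)
    (xp sp : Fin n ⊕ Fin n → ℝ)
    (hxp : xp = x + Δx) (hsp : sp = s + Δs)
    (τp : ℝ) (hτp : τp = (1 - β / Real.sqrt (2 * n)) * τ) :
    (∀ i, 0 < xp i) ∧ (∀ i, 0 < sp i) ∧
    enorm' (fun i => xp i * sp i - τp) ≤ α * τp := by
  obtain ⟨hα₀, hα₁⟩ := hα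
  have hσ : σ = scalingErrorCoeff α δ + secondOrderCoeff α δ := hσdef
  obtain ⟨hxp_pos, hsp_pos, hstep⟩ := newton_step_mem_neighborhood hδ.le hx hs hxt hst hcen
    hratx hrats (dotProduct_nonneg_of_newton hHt (by positivity) heq1 heq2) (congrFun heq3)
    hα₀.le hα₁ hτ (hσ ▸ hσlt.trans hα₁)
  subst hxp hsp
  refine ⟨hxp_pos, hsp_pos, ?_⟩
  have hN : 0 < √(2 * n) := Real.sqrt_pos.mpr (by positivity)
  have hβ₀ : 0 ≤ β := hβ ▸ div_nonneg (by linarith) (by positivity)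
  have hshift : enorm' (fun _ : Fin n ⊕ Fin n => τ - τp) = β * τ := by
    rw [hτp, show τ - (1 - β / √(2 * n)) * τ = β / √(2 * n) * τ by ring, enorm'_const,
      Fintype.card_sum, Fintype.card_fin, abs_of_nonneg (by positivity),
      show ((n + n : ℕ) : ℝ) = 2 * n by push_cast; ring]
    field_simp
  calc enorm' (fun i => (x + Δx) i * (s + Δs) i - τp)
      ≤ enorm' (fun i => (x i + Δx i) * (s i + Δs i) - τ) + enorm' (fun _ => τ - τp) := by
        convert enorm'_add_le _ _ using 2
        funext i
        simp only [Pi.add_apply]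
        ring
    _ ≤ σ * τ + β * τ := by rw [hσ, hshift]; linarith
    _ = α * τp := by
        rw [hτp, hβ]
        field_simp
        ring

/-- Theorem 1 of the paper, one step: the next iterate of the approximated
Newton step stays strictly positive and in the `α`-neighborhood of the central path for
`τ⁺ = (1 − β/√(2n))τ`. -/
theorem approx_newton_step_invariance (n : ℕ) (hn : 0 < n)
    (α δ η σ β : ℝ) (hα : α ∈ Set.Ioo (0:ℝ) 1) (hδ : 0 < δ)
    (hηdef : η = (1 + δ) ^ 3 * α / (1 - α)) (hηlt : η < 1)
    (hσdef : σ = Real.sqrt 2 * δ * (1 + δ) ^ 2 * α * Real.sqrt ((1 + α) / (1 - α))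
      + (1 + δ) ^ 2 * α ^ 2 / (2 * (1 - α)))
    (hσlt : σ < α)
    (hβ : β = (α - σ) / (1 + α / Real.sqrt (2 * n)))
    (Ht : Matrix (Fin n) (Fin n) ℝ) (hHt : Ht.PosSemidef)
    (lam : ℝ) (hlam : 0 ≤ lam)
    (Ω : Matrix (Fin n) (Fin n ⊕ Fin n) ℝ)
    (hΩ : Ω = Matrix.fromCols (1 : Matrix (Fin n) (Fin n) ℝ) (-1))
    (τ : ℝ) (hτ : 0 < τ)
    (x s xt st : Fin n ⊕ Fin n → ℝ)
    (hx : ∀ i, 0 < x i) (hs : ∀ i, 0 < s i)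
    (hxt : ∀ i, 0 < xt i) (hst : ∀ i, 0 < st i)
    (hcen : enorm' (fun i => x i * s i - τ) ≤ α * τ)
    (hratx : ∀ i, xt i / x i ∈ Set.Icc (1 / (1 + δ)) (1 + δ))
    (hrats : ∀ i, st i / s i ∈ Set.Icc (1 / (1 + δ)) (1 + δ))
    (Δz : Fin n → ℝ) (Δx Δs : Fin n ⊕ Fin n → ℝ)
    (heq1 : (2 * lam) • Ht.mulVec Δz + Ω.mulVec Δx = 0)
    (heq2 : Ωᵀ.mulVec Δz + Δs = 0)
    (heq3 : (fun i => st i * Δx i + xt i * Δs i) = fun i => τ - x i * s i)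
    (xp sp : Fin n ⊕ Fin n → ℝ)
    (hxp : xp = x + Δx) (hsp : sp = s + Δs)
    (τp : ℝ) (hτp : τp = (1 - β / Real.sqrt (2 * n)) * τ) :
    (∀ i, 0 < xp i) ∧ (∀ i, 0 < sp i) ∧
    enorm' (fun i => xp i * sp i - τp) ≤ α * τp :=
  approx_newton_step_invariance_general n hn α δ σ β hα hδ hσdef hσlt hβ Ht hHt lam hlam Ω τ hτ x s
    xt st hx hs hxt hst hcen hratx hrats Δz Δx Δs heq1 heq2 heq3 xp sp hxp hsp τp hτp
end

section
/- Let n ∈ ℕ₊, let H̃ ∈ ℝ^{n×n}, λ ∈ ℝ, τ > 0, and let γ, θ, φ, ψ, γ̃, θ̃, φ̃, ψ̃ ∈ ℝ^n, where all components of φ, ψ, φ̃, ψ̃ are positive. Suppose Δz ∈ ℝ^n satisfies the compact system (2λH̃ + diag(γ̃/φ̃) + diag(θ̃/ψ̃))·Δz = τ·(1/ψ̃) − τ·(1/φ̃) + (γ ⊙ φ)/φ̃ − (θ ⊙ ψ)/ψ̃, and define Δγ = (γ̃/φ̃) ⊙ Δz + τ·(1/φ̃) − (γ ⊙ φ)/φ̃,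 Δθ = −(θ̃/ψ̃) ⊙ Δz + τ·(1/ψ̃) − (θ ⊙ ψ)/ψ̃, Δφ = −Δz, Δψ = Δz. Then with Ω = [I, −I] ∈ ℝ^{n×2n}, Δx = col(Δγ, Δθ), Δs = col(Δφ, Δψ), x = col(γ, θ), s = col(φ, ψ), x̃ = col(γ̃, θ̃), and s̃ = col(φ̃, ψ̃), the approximated Newton system holds: 2λH̃Δz + ΩΔx = 0, ΩᵀΔz + Δs = 0, and s̃ ⊙ Δx + x̃ ⊙ Δs = τe − x ⊙ s. -/
open Matrix

/-!
Substituting the back-substitution formulas reduces each block of the Newton system to an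
identity: the first block is the compact system itself, read row by row, the second is the
pair `Δφ = -Δz`, `Δψ = Δz`, and the complementarity rows follow after clearing the
denominators `φ̃ᵢ`, `ψ̃ᵢ`.
-/

section

variable {n R : Type*} [Fintype n] [DecidableEq n]

theorem smul_add_diagonal_add_diagonal_mulVec [CommSemiring R] (c : R) (H : Matrix n n R)
    (a b z : n → R) :
    (c • H + diagonal a + diagonal b) *ᵥ z = c • H *ᵥ z + a * z + b * z := by
  ext i
  simp only [add_mulVec, smul_mulVec, mulVec_diagonal, Pi.add_apply, Pi.mul_apply]

theorem fromCols_one_neg_one_mulVec_sumElim [Ring R] (u v : n → R) :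
    fromCols (1 : Matrix n n R) (-1) *ᵥ Sum.elim u v = u - v := by
  rw [fromCols_mulVec_sumElim, one_mulVec, neg_mulVec, one_mulVec, sub_eq_add_neg]

theorem transpose_fromCols_one_neg_one_mulVec [Ring R] (z : n → R) :
    (fromCols (1 : Matrix n n R) (-1))ᵀ *ᵥ z = Sum.elim z (-z) := by
  rw [transpose_fromCols, fromRows_mulVec, transpose_neg, transpose_one, neg_mulVec, one_mulVec]

end

theorem complementarity_backsubst {K : Type*} [Field K] {s : K} (hs : s ≠ 0) (xt d τ x y : K) :
    s * (xt / s * d + τ * s⁻¹ - x * y / s) - xt * d = τ - x * y := by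
  field_simp
  ring

theorem compact_implies_approx_newton_general (n : ℕ)
    (Ht : Matrix (Fin n) (Fin n) ℝ) (lam : ℝ) (τ : ℝ)
    (γ θ φ ψ γt θt φt ψt : Fin n → ℝ)
    (hφt : ∀ i, 0 < φt i) (hψt : ∀ i, 0 < ψt i)
    (Δz : Fin n → ℝ)
    (hcompact : ((2 * lam) • Ht + Matrix.diagonal (fun i => γt i / φt i)
        + Matrix.diagonal (fun i => θt i / ψt i)).mulVec Δz
      = fun i => τ * (ψt i)⁻¹ - τ * (φt i)⁻¹ + (γ i * φ i) / φt i - (θ i * ψ i) / ψt i)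
    (Δγ Δθ Δφ Δψ : Fin n → ℝ)
    (hΔγ : Δγ = fun i => (γt i / φt i) * Δz i + τ * (φt i)⁻¹ - (γ i * φ i) / φt i)
    (hΔθ : Δθ = fun i => -(θt i / ψt i) * Δz i + τ * (ψt i)⁻¹ - (θ i * ψ i) / ψt i)
    (hΔφ : Δφ = -Δz) (hΔψ : Δψ = Δz)
    (Ω : Matrix (Fin n) (Fin n ⊕ Fin n) ℝ)
    (hΩ : Ω = Matrix.fromCols (1 : Matrix (Fin n) (Fin n) ℝ) (-1))
    (Δx Δs x s xt st : Fin n ⊕ Fin n → ℝ)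
    (hΔx : Δx = Sum.elim Δγ Δθ) (hΔs : Δs = Sum.elim Δφ Δψ)
    (hxdef : x = Sum.elim γ θ) (hsdef : s = Sum.elim φ ψ)
    (hxtdef : xt = Sum.elim γt θt) (hstdef : st = Sum.elim φt ψt) :
    (2 * lam) • Ht.mulVec Δz + Ω.mulVec Δx = 0 ∧
    Ωᵀ.mulVec Δz + Δs = 0 ∧
    (fun i => st i * Δx i + xt i * Δs i) = fun i => τ - x i * s i := by
  subst Δγ Δθ Δφ Δψ Ω Δx Δs x s xt st
  rw [smul_add_diagonal_add_diagonal_mulVec] at hcompact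
  refine ⟨?_, ?_, ?_⟩
  · rw [fromCols_one_neg_one_mulVec_sumElim]
    funext i
    have hrow := congrFun hcompact i
    simp only [Pi.add_apply, Pi.sub_apply, Pi.smul_apply, Pi.mul_apply, Pi.zero_apply,
      smul_eq_mul] at hrow ⊢
    linarith
  · rw [transpose_fromCols_one_neg_one_mulVec]
    funext i
    rcases i with i | i <;> simp
  · funext i
    rcases i with i | i
    · simp only [Sum.elim_inl, Pi.neg_apply]
      linear_combination complementarity_backsubst (hφt i).ne' (γt i) (Δz i) τ (γ i) (φ i)
    · simp only [Sum.elim_inr]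
      linear_combination complementarity_backsubst (hψt i).ne' (θt i) (-Δz i) τ (θ i) (ψ i)

/-- the solution of the approximated compact linear system, together with
the back-substitutions for `Δγ, Δθ, Δφ, Δψ`, solves the approximated Newton system. -/
theorem compact_implies_approx_newton (n : ℕ) (hn : 0 < n)
    (Ht : Matrix (Fin n) (Fin n) ℝ) (lam : ℝ) (τ : ℝ) (hτ : 0 < τ)
    (γ θ φ ψ γt θt φt ψt : Fin n → ℝ)
    (hφ : ∀ i, 0 < φ i) (hψ : ∀ i, 0 < ψ i)
    (hφt : ∀ i, 0 < φt i) (hψt : ∀ i, 0 < ψt i)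
    (Δz : Fin n → ℝ)
    (hcompact : ((2 * lam) • Ht + Matrix.diagonal (fun i => γt i / φt i)
        + Matrix.diagonal (fun i => θt i / ψt i)).mulVec Δz
      = fun i => τ * (ψt i)⁻¹ - τ * (φt i)⁻¹ + (γ i * φ i) / φt i - (θ i * ψ i) / ψt i)
    (Δγ Δθ Δφ Δψ : Fin n → ℝ)
    (hΔγ : Δγ = fun i => (γt i / φt i) * Δz i + τ * (φt i)⁻¹ - (γ i * φ i) / φt i)
    (hΔθ : Δθ = fun i => -(θt i / ψt i) * Δz i + τ * (ψt i)⁻¹ - (θ i * ψ i) / ψt i)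
    (hΔφ : Δφ = -Δz) (hΔψ : Δψ = Δz)
    (Ω : Matrix (Fin n) (Fin n ⊕ Fin n) ℝ)
    (hΩ : Ω = Matrix.fromCols (1 : Matrix (Fin n) (Fin n) ℝ) (-1))
    (Δx Δs x s xt st : Fin n ⊕ Fin n → ℝ)
    (hΔx : Δx = Sum.elim Δγ Δθ) (hΔs : Δs = Sum.elim Δφ Δψ)
    (hxdef : x = Sum.elim γ θ) (hsdef : s = Sum.elim φ ψ)
    (hxtdef : xt = Sum.elim γt θt) (hstdef : st = Sum.elim φt ψt) :
    (2 * lam) • Ht.mulVec Δz + Ω.mulVec Δx = 0 ∧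
    Ωᵀ.mulVec Δz + Δs = 0 ∧
    (fun i => st i * Δx i + xt i * Δs i) = fun i => τ - x i * s i :=
  compact_implies_approx_newton_general n Ht lam τ γ θ φ ψ γt θt φt ψt hφt hψt Δz hcompact Δγ Δθ Δφ
    Δψ hΔγ hΔθ hΔφ hΔψ Ω hΩ Δx Δs x s xt st hΔx hΔs hxdef hsdef hxtdef hstdef
end
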